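/- arXiv:2507.15762 — 3 statements merged into one kernel-verified Lean document; each statement's English description precedes it below -/
import Mathlib

section
/- Let λ₁, λ₂ : ℝ → ℂ be continuous functions satisfying λ₁(t+1) = λ₂(t) and λ₂(t+1) = λ₁(t) for all t, with λ₁(t) ≠ λ₂(t) for all t. Then there is no continuous labeling μ₁, μ₂ : ℝ → ℂ of the same pairs of values (i.e. {μ₁(t), μ₂(t)} = {λ₁(t), λ₂(t)} for all t, with μ₁, μ₂ continuous) such that μ₁ and μ₂ are 1-periodic. -/
/-!
A continuous choice between two continuous functions that never agree is locally constant in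
its choice, so on the connected line `μ₁` coincides with `λ₁` or with `λ₂` everywhere.
Either way, periodicity of `μ₁` together with the swap `λ₁(t + 1) = λ₂(t)` forces `λ₁` and
`λ₂` to agree somewhere.
-/

open Set

theorem eq_or_eq_of_continuous_of_forall_eq_or_eq {X Y : Type*} [TopologicalSpace X]
    [PreconnectedSpace X] [TopologicalSpace Y] [T2Space Y] {f g h : X → Y}
    (hf : Continuous f) (hg : Continuous g) (hh : Continuous h) (hne : ∀ x, f x ≠ g x)
    (hfg : ∀ x, h x = f x ∨ h x = g x) : h = f ∨ h = g := by
  have hcompl : {x | h x = f x}ᶜ = {x | h x = g x} := by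
    ext x
    simp only [mem_compl_iff, mem_ofPred_eq]
    grind [hne x, hfg x]
  have hclopen : IsClopen {x | h x = f x} :=
    ⟨isClosed_eq hh hf, by rw [← isClosed_compl_iff, hcompl]; exact isClosed_eq hh hg⟩
  rcases isClopen_iff.mp hclopen with hempty | huniv
  · right
    funext x
    have hx : x ∈ {x | h x = f x}ᶜ := by simp [hempty]
    rwa [hcompl] at hx
  · left
    funext x
    have hx : x ∈ {x | h x = f x} := huniv ▸ mem_univ x
    exact hx

theorem stmt_0_general (l1 l2 : ℝ → ℂ) (h1 : Continuous l1)
    (hne : ∀ t, l1 t ≠ l2 t)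
    (hsw1 : ∀ t, l1 (t + 1) = l2 t) :
    ¬ ∃ m1 m2 : ℝ → ℂ, Continuous m1 ∧ Continuous m2 ∧
      (∀ t, ({m1 t, m2 t} : Set ℂ) = {l1 t, l2 t}) ∧
      (∀ t, m1 (t + 1) = m1 t) ∧ (∀ t, m2 (t + 1) = m2 t) := by
  rintro ⟨m1, m2, hm1, -, hset, hp1, -⟩
  have h2 : Continuous l2 := (continuous_congr hsw1).mp (h1.comp (continuous_add_const 1))
  have hmem (t : ℝ) : m1 t = l1 t ∨ m1 t = l2 t := by
    simpa only [hset t, mem_insert_iff, mem_singleton_iff] using mem_insert (m1 t) {m2 t}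
  rcases eq_or_eq_of_continuous_of_forall_eq_or_eq h1 h2 hm1 hne hmem with rfl | rfl
  · exact hne 0 (by rw [← hsw1 0, hp1 0])
  · exact hne 1 (by simpa using (hsw1 0).trans (hp1 0).symm)

theorem stmt_0 (l1 l2 : ℝ → ℂ) (h1 : Continuous l1) (h2 : Continuous l2)
    (hne : ∀ t, l1 t ≠ l2 t)
    (hsw1 : ∀ t, l1 (t + 1) = l2 t) (hsw2 : ∀ t, l2 (t + 1) = l1 t) :
    ¬ ∃ m1 m2 : ℝ → ℂ, Continuous m1 ∧ Continuous m2 ∧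
      (∀ t, ({m1 t, m2 t} : Set ℂ) = {l1 t, l2 t}) ∧
      (∀ t, m1 (t + 1) = m1 t) ∧ (∀ t, m2 (t + 1) = m2 t) :=
  stmt_0_general l1 l2 h1 hne hsw1
end

section
/- Let V : ℝ → GL(n, ℂ) be continuously differentiable, Φ(t) = diag(exp(i·α₁(t)), …, exp(i·αₙ(t))) with each αⱼ : ℝ → ℝ continuously differentiable, Π a permutation matrix, and suppose V(t+1) = V(t)·Π·Φ(t) for all t. If the diagonal entries of P(t) := V(t)⁻¹ V'(t) are all real for all t, then each αⱼ is constant. -/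
/-!
Write `V (t + 1) = V t * Π * Φ t` with `Φ = diagonal (exp (i α))`. Differentiating gives
`P (t + 1) = Φ⁻¹ Π⁻¹ P t Π Φ + i · diagonal α'`, and conjugating by the monomial matrix `Π Φ`
only permutes the diagonal of `P t` (the phases cancel). So the `j`-th diagonal entry of
`P (t + 1)` is `P t (σ j) (σ j) + i α'_j t`; both diagonals being real forces `α' = 0`.
-/

open Matrix Complex

namespace Matrix

variable {n R : Type*} [Fintype n] [DecidableEq n] [CommRing R]

theorem mul_of_ite_eq_submatrix (A : Matrix n n R) (σ : Equiv.Perm n) :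
    A * of (fun i j => if i = σ j then (1 : R) else 0) = A.submatrix id σ := by
  ext i j
  simp [mul_apply]

theorem inv_mul_apply_self_of_submatrix_mul_diagonal (A A' : Matrix n n R) (hA : IsUnit A.det)
    (σ : Equiv.Perm n) (d c : n → R) (hd : IsUnit d) (j : n) :
    ((A.submatrix id σ * diagonal d)⁻¹ *
        (A'.submatrix id σ * diagonal d + A.submatrix id σ * diagonal (d * c))) j j =
      (A⁻¹ * A') (σ j) (σ j) + c j := by
  have hinv : (A.submatrix id σ * diagonal d)⁻¹ =
      diagonal (Ring.inverse d) * A⁻¹.submatrix σ id := by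
    rw [mul_inv_rev, inv_diagonal]
    exact congrArg _ (inv_submatrix_equiv A (Equiv.refl n) σ)
  have hsub (M N : Matrix n n R) : M.submatrix σ id * N.submatrix id σ = (M * N).submatrix σ σ :=
    (submatrix_mul M N σ id σ Function.bijective_id).symm
  have hd' : Ring.inverse d j * d j = 1 := congrFun (Ring.inverse_mul_cancel d hd) j
  rw [hinv, Matrix.mul_add, Matrix.mul_assoc, Matrix.mul_assoc,
    ← Matrix.mul_assoc _ (A'.submatrix _ _), ← Matrix.mul_assoc _ (A.submatrix _ _), hsub, hsub,
    nonsing_inv_mul _ hA]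
  simp only [Matrix.add_apply, diagonal_mul, mul_diagonal, submatrix_apply, one_apply_eq,
    Pi.mul_apply]
  linear_combination ((A⁻¹ * A') (σ j) (σ j) + c j) * hd'

end Matrix

theorem hasDerivAt_submatrix_mul_diagonal_cexp {n : Type*} [Fintype n] [DecidableEq n]
    {V V' : ℝ → Matrix n n ℂ} {α α' : n → ℝ → ℝ} (σ : Equiv.Perm n)
    (hV : ∀ i j t, HasDerivAt (fun s => V s i j) (V' t i j) t)
    (hα : ∀ j t, HasDerivAt (α j) (α' j t) t) (i k : n) (t : ℝ) :
    HasDerivAt (fun s => ((V s).submatrix id σ * diagonal fun j => cexp (I * α j s)) i k)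
      (((V' t).submatrix id σ * diagonal (fun j => cexp (I * α j t)) +
        (V t).submatrix id σ * diagonal ((fun j => cexp (I * α j t)) * fun j => I * α' j t)) i k)
      t := by
  simp only [Matrix.add_apply, mul_diagonal, submatrix_apply, id, Pi.mul_apply]
  refine ((hV i (σ k) t).mul ((hα k t).ofReal_comp.const_mul I).cexp).congr_deriv ?_
  ring

theorem stmt_6_general {n : ℕ} (V V' : ℝ → Matrix (Fin n) (Fin n) ℂ)
    (α α' : Fin n → ℝ → ℝ) (σ : Equiv.Perm (Fin n))
    (hinv : ∀ t, IsUnit (V t).det)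
    (hVderiv : ∀ i j t, HasDerivAt (fun s => V s i j) (V' t i j) t)
    (hαderiv : ∀ j t, HasDerivAt (α j) (α' j t) t)
    (hmon : ∀ t, V (t + 1) = V t *
      (Matrix.of fun i j : Fin n => if i = σ j then (1 : ℂ) else 0) *
      Matrix.diagonal (fun j => Complex.exp (Complex.I * (α j t))))
    (hreal : ∀ t j, (((V t)⁻¹ * V' t) j j).im = 0) :
    ∀ j s t, α j s = α j t := by
  simp only [mul_of_ite_eq_submatrix] at hmon
  have hV'_shift (t : ℝ) : V' (t + 1) =
      (V' t).submatrix id σ * diagonal (fun j => cexp (I * α j t)) +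
        (V t).submatrix id σ * diagonal ((fun j => cexp (I * α j t)) * fun j => I * α' j t) := by
    ext i k
    refine HasDerivAt.unique ?_ (hasDerivAt_submatrix_mul_diagonal_cexp σ hVderiv hαderiv i k t)
    simpa only [← hmon] using (hVderiv i k (t + 1)).comp_add_const t 1
  have hα'_zero (j : Fin n) (t : ℝ) : α' j t = 0 := by
    have h := hreal (t + 1) j
    rw [hmon, hV'_shift, inv_mul_apply_self_of_submatrix_mul_diagonal _ _ (hinv t) σ _ _
      (by simp [Pi.isUnit_iff, Complex.exp_ne_zero])] at h
    simpa [hreal t (σ j)] using h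
  intro j s t
  exact is_const_of_deriv_eq_zero (fun x => (hαderiv j x).differentiableAt)
    (fun x => by simpa [hα'_zero] using (hαderiv j x).deriv) s t

theorem stmt_6 {n : ℕ} (V V' : ℝ → Matrix (Fin n) (Fin n) ℂ)
    (α α' : Fin n → ℝ → ℝ) (σ : Equiv.Perm (Fin n))
    (hinv : ∀ t, IsUnit (V t).det)
    (hVderiv : ∀ i j t, HasDerivAt (fun s => V s i j) (V' t i j) t)
    (hVcont : ∀ i j, Continuous fun t => V' t i j)
    (hαderiv : ∀ j t, HasDerivAt (α j) (α' j t) t)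
    (hαcont : ∀ j, Continuous (α' j))
    (hmon : ∀ t, V (t + 1) = V t *
      (Matrix.of fun i j : Fin n => if i = σ j then (1 : ℂ) else 0) *
      Matrix.diagonal (fun j => Complex.exp (Complex.I * (α j t))))
    (hreal : ∀ t j, (((V t)⁻¹ * V' t) j j).im = 0) :
    ∀ j s t, α j s = α j t :=
  stmt_6_general V V' α α' σ hinv hVderiv hαderiv hmon hreal
end

section
/- Let g : ℝ → ℝ be continuous, 1-periodic, and non-constant. Then there exists a C^∞ function φ : ℝ → ℝ with φ(t+1) = φ(t) + 1 for all t such that g ∘ φ is 1-periodic and 1 is the minimal positive period of g ∘ φ (i.e. g ∘ φ has no period τ with 0 < τ < 1). -/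
open Real Set

noncomputable section

/-- Sawtooth on the fundamental domain `[1/4, 5/4]`. -/
def mySaw : ℝ → ℝ := fun t => if t ≤ 1 then -t else 3 * t - 4

lemma mySaw_cont : Continuous mySaw := by
  unfold mySaw
  apply Continuous.if_le (by fun_prop) (by fun_prop) continuous_id continuous_const
  rintro x rfl; norm_num

lemma mySaw_endpoints : mySaw (1/4) = mySaw (1/4 + 1) := by norm_num [mySaw]

/-- The function `cos (2πt)` as a map on the circle. -/
def myCosPer : Function.Periodic (fun t : ℝ => Real.cos (2 * π * t)) 1 := by
  intro t
  simp only [mul_add, mul_one]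
  exact Real.cos_add_two_pi _

def mySinPer : Function.Periodic (fun t : ℝ => Real.sin (2 * π * t)) 1 := by
  intro t
  simp only [mul_add, mul_one]
  exact Real.sin_add_two_pi _

lemma cont_lift {f : ℝ → ℝ} (hf : Function.Periodic f 1) (hc : Continuous f) :
    Continuous hf.lift := by
  exact continuous_coinduced_dom.mpr hc

def myCos : C(AddCircle (1:ℝ), ℝ) := ⟨myCosPer.lift, cont_lift _ (by fun_prop)⟩
def mySin : C(AddCircle (1:ℝ), ℝ) := ⟨mySinPer.lift, cont_lift _ (by fun_prop)⟩

lemma myCos_coe (t : ℝ) : myCos (t : AddCircle (1:ℝ)) = Real.cos (2 * π * t) :=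
  myCosPer.lift_coe t

lemma mySin_coe (t : ℝ) : mySin (t : AddCircle (1:ℝ)) = Real.sin (2 * π * t) :=
  mySinPer.lift_coe t

def myAlg : Subalgebra ℝ C(AddCircle (1:ℝ), ℝ) := Algebra.adjoin ℝ {myCos, mySin}

/-- Coe of reals differing by an integer agree on the circle. -/
lemma coe_add_int (t : ℝ) (n : ℤ) : ((t + n : ℝ) : AddCircle (1:ℝ)) = (t : AddCircle (1:ℝ)) := by
  rw [QuotientAddGroup.eq_iff_sub_mem]
  refine ⟨n, ?_⟩
  simp

lemma circle_eq_of_trig {a b : ℝ} (hc : Real.cos (2*π*a) = Real.cos (2*π*b))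
    (hs : Real.sin (2*π*a) = Real.sin (2*π*b)) : ((a : AddCircle (1:ℝ)) = (b : AddCircle (1:ℝ))) := by
  have he : Complex.exp ((2*π*a : ℝ) * Complex.I) = Complex.exp ((2*π*b : ℝ) * Complex.I) := by
    rw [Complex.exp_mul_I, Complex.exp_mul_I, ← Complex.ofReal_cos, ← Complex.ofReal_cos,
      ← Complex.ofReal_sin, ← Complex.ofReal_sin, hc, hs]
  obtain ⟨n, hn⟩ := Complex.exp_eq_exp_iff_exists_int.mp he
  have him := congrArg Complex.im hn
  simp [Complex.add_im, Complex.mul_im] at him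
  -- him : 2*π*a = 2*π*b + n*(2*π)  (in some form)
  have hab : a - b = n := by
    have h2π : (2*π : ℝ) ≠ 0 := by positivity
    have := mul_left_cancel₀ h2π (show (2*π) * a = (2*π) * (b + n) by rw [him]; ring)
    linarith
  rw [QuotientAddGroup.eq_iff_sub_mem]
  exact ⟨n, by simp [hab]⟩

lemma mySep : myAlg.SeparatesPoints := by
  intro x y hxy
  obtain ⟨a, rfl⟩ := QuotientAddGroup.mk_surjective x
  obtain ⟨b, rfl⟩ := QuotientAddGroup.mk_surjective y
  by_cases hc : Real.cos (2*π*a) = Real.cos (2*π*b)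
  · have hs : Real.sin (2*π*a) ≠ Real.sin (2*π*b) := by
      intro hs
      exact hxy (circle_eq_of_trig hc hs)
    exact ⟨mySin, ⟨mySin, Algebra.subset_adjoin (by simp), rfl⟩, by
      simpa [mySin_coe] using hs⟩
  · exact ⟨myCos, ⟨myCos, Algebra.subset_adjoin (by simp), rfl⟩, by
      simpa [myCos_coe] using hc⟩

lemma myAlg_contDiff {q : C(AddCircle (1:ℝ), ℝ)} (hq : q ∈ myAlg) :
    ContDiff ℝ (⊤ : ℕ∞) (fun t : ℝ => q (t : AddCircle (1:ℝ))) := by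
  induction hq using Algebra.adjoin_induction with
  | mem f hf =>
      rcases hf with rfl | rfl
      · have : (fun t : ℝ => myCos (t : AddCircle (1:ℝ))) = fun t => Real.cos (2*π*t) := by
          funext t; exact myCos_coe t
        rw [this]
        exact Real.contDiff_cos.comp (contDiff_const.mul contDiff_id)
      · have : (fun t : ℝ => mySin (t : AddCircle (1:ℝ))) = fun t => Real.sin (2*π*t) := by
          funext t; exact mySin_coe t
        rw [this]
        exact Real.contDiff_sin.comp (contDiff_const.mul contDiff_id)
  | algebraMap r =>
      simpa using contDiff_const (c := r)
  | add f g hf hg ihf ihg =>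
      simpa using ihf.add ihg
  | mul f g hf hg ihf ihg =>
      simpa using ihf.mul ihg

end

theorem stmt_14 (g : ℝ → ℝ) (hg : Continuous g) (hper : ∀ t, g (t + 1) = g t)
    (hnc : ∃ s t, g s ≠ g t) :
    ∃ φ : ℝ → ℝ, ContDiff ℝ (⊤ : ℕ∞) φ ∧ (∀ t, φ (t + 1) = φ t + 1) ∧
      (∀ t, g (φ (t + 1)) = g (φ t)) ∧
      ∀ τ : ℝ, 0 < τ → τ < 1 → ¬ (∀ t, g (φ (t + τ)) = g (φ t)) := by
  classical
  haveI : Fact ((0:ℝ) < 1) := ⟨one_pos⟩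
  have gper : Function.Periodic g 1 := hper
  have gint : ∀ (x : ℝ) (n : ℤ), g (x + n) = g x := by
    intro x n
    simpa using (gper.int_mul n) x
  obtain ⟨x₀, hx₀mem, hx₀⟩ := isCompact_Icc.exists_isMaxOn
    (⟨0, by norm_num⟩ : (Set.Icc (0:ℝ) 1).Nonempty) hg.continuousOn
  have hx₀' := isMaxOn_iff.mp hx₀
  set M := g x₀ with hM
  have gmax : ∀ y, g y ≤ M := by
    intro y
    have h1 : g y = g (Int.fract y) := by
      conv_lhs => rw [← Int.fract_add_floor y]
      exact gint _ _
    rw [h1]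
    exact hx₀' _ ⟨Int.fract_nonneg y, (Int.fract_lt_one y).le⟩
  obtain ⟨v, hv⟩ : ∃ v, g v < M := by
    obtain ⟨s, t, hst⟩ := hnc
    rcases lt_or_eq_of_le (gmax s) with h | h
    · exact ⟨s, h⟩
    · exact ⟨t, lt_of_le_of_ne (gmax t) (fun ht => hst (h.trans ht.symm))⟩
  obtain ⟨δ, hδpos, hδ⟩ : ∃ δ > 0, ∀ x, |x - v| < δ → g x < M := by
    have hmem : {x | g x < M} ∈ nhds v := (isOpen_lt hg continuous_const).mem_nhds hv
    obtain ⟨δ, hδpos, hδ⟩ := Metric.mem_nhds_iff.mp hmem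
    exact ⟨δ, hδpos, fun x hx => hδ (by simpa [Metric.mem_ball, Real.dist_eq] using hx)⟩
  set P₀ : C(AddCircle (1:ℝ), ℝ) :=
    ⟨AddCircle.liftIco 1 (1/4) mySaw,
      AddCircle.liftIco_continuous (by norm_num [mySaw]) mySaw_cont.continuousOn⟩ with hP₀
  obtain ⟨q, hq⟩ := ContinuousMap.exists_mem_subalgebra_near_continuousMap_of_separatesPoints
    myAlg mySep P₀ δ hδpos
  have hqp : ∀ x, |(q : C(AddCircle (1:ℝ), ℝ)) x - P₀ x| < δ := by
    intro x
    calc |(q : C(AddCircle (1:ℝ), ℝ)) x - P₀ x|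
        = ‖((q : C(AddCircle (1:ℝ), ℝ)) - P₀) x‖ := by simp [ContinuousMap.sub_apply]
      _ ≤ ‖(q : C(AddCircle (1:ℝ), ℝ)) - P₀‖ := ContinuousMap.norm_coe_le_norm _ x
      _ < δ := hq
  set φ : ℝ → ℝ := fun t => t + (q : C(AddCircle (1:ℝ), ℝ)) (t : AddCircle (1:ℝ)) + v with hφ
  have hsmooth : ContDiff ℝ (⊤ : ℕ∞) φ := (contDiff_id.add (myAlg_contDiff q.2)).add contDiff_const
  have hint : ∀ (t : ℝ) (n : ℤ), φ (t + n) = φ t + n := by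
    intro t n
    simp only [hφ]
    rw [coe_add_int]
    ring
  have hone : ∀ t, φ (t + 1) = φ t + 1 := by
    intro t
    simpa using hint t 1
  have hgone : ∀ t, g (φ (t + 1)) = g (φ t) := fun t => by rw [hone, hper]
  have hgint : ∀ (t : ℝ) (n : ℤ), g (φ (t + n)) = g (φ t) := fun t n => by rw [hint, gint]
  have hflat : ∀ t : ℝ, 1/4 ≤ Int.fract t → g (φ t) < M := by
    intro t ht
    set x := Int.fract t with hx
    have hx0 : 0 ≤ x := Int.fract_nonneg t
    have hx1 : x < 1 := Int.fract_lt_one t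
    have hxt : x + (⌊t⌋ : ℤ) = t := by exact_mod_cast Int.fract_add_floor t
    have h1 : g (φ t) = g (φ x) := by rw [← hxt, hgint]
    rw [h1]
    have hP : P₀ (x : AddCircle (1:ℝ)) = -x := by
      have hmem : x ∈ Set.Ico (1/4 : ℝ) (1/4 + 1) := ⟨ht, by linarith⟩
      have h2 := AddCircle.liftIco_coe_apply (f := mySaw) hmem
      simp only [hP₀, ContinuousMap.coe_mk]
      rw [h2, mySaw, if_pos hx1.le]
    have hφx : φ x = v + ((q : C(AddCircle (1:ℝ), ℝ)) (x : AddCircle (1:ℝ))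
        - P₀ (x : AddCircle (1:ℝ))) := by
      simp only [hφ]
      rw [hP]
      ring
    rw [hφx]
    exact hδ _ (by simpa using hqp (x : AddCircle (1:ℝ)))
  obtain ⟨t₀, hteq⟩ : ∃ t, φ t = x₀ := by
    obtain ⟨n, hn⟩ := exists_nat_ge |x₀ - φ 0|
    have habs := abs_le.mp (le_trans le_rfl hn : |x₀ - φ 0| ≤ n)
    have hneg : φ (-(n:ℝ)) = φ 0 - n := by
      have := hint 0 (-(n:ℤ))
      push_cast at this
      simpa [sub_eq_add_neg] using this
    have hpos : φ (n:ℝ) = φ 0 + n := by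
      have := hint 0 (n:ℤ)
      push_cast at this
      simpa using this
    have h1 : φ (-(n:ℝ)) ≤ x₀ := by rw [hneg]; linarith [habs.1, habs.2]
    have h2 : x₀ ≤ φ (n:ℝ) := by rw [hpos]; linarith [habs.1, habs.2]
    have hsub := intermediate_value_Icc (neg_le_self (Nat.cast_nonneg n))
      hsmooth.continuous.continuousOn
    obtain ⟨t, _, ht⟩ := hsub ⟨h1, h2⟩
    exact ⟨t, ht⟩
  set a := Int.fract t₀ with ha
  have ha0 : 0 ≤ a := Int.fract_nonneg t₀
  have ha1 : a < 1 := Int.fract_lt_one t₀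
  have haM : g (φ a) = M := by
    have hxt : a + (⌊t₀⌋ : ℤ) = t₀ := by exact_mod_cast Int.fract_add_floor t₀
    have := hgint a ⌊t₀⌋
    rw [hxt, hteq] at this
    exact this.symm
  have ha4 : a < 1/4 := by
    by_contra h
    have := hflat a (by rw [Int.fract_eq_self.mpr ⟨ha0, ha1⟩]; exact le_of_not_gt h)
    rw [haM] at this
    exact lt_irrefl M this
  refine ⟨φ, hsmooth, hone, hgone, ?_⟩
  intro τ hτ0 hτ1 hτ
  obtain ⟨s, hs0, hs2, hs⟩ : ∃ s, 0 < s ∧ s ≤ 1/2 ∧ ∀ t, g (φ (t + s)) = g (φ t) := by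
    by_cases hc : τ ≤ 1/2
    · exact ⟨τ, hτ0, hc, hτ⟩
    · refine ⟨1 - τ, by linarith, by linarith, fun t => ?_⟩
      have h1 := hτ (t + (1 - τ))
      rw [show t + (1 - τ) + τ = t + 1 by ring] at h1
      rw [← h1, hgone]
  have iter : ∀ n : ℕ, g (φ (a + n * s)) = M := by
    intro n
    induction n with
    | zero => simpa using haM
    | succ k ih =>
        have hstep : a + ((k+1 : ℕ) : ℝ) * s = (a + k * s) + s := by push_cast; ring
        rw [hstep, hs, ih]
  have hex : ∃ n : ℕ, 1/4 ≤ a + n * s := by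
    obtain ⟨n, hn⟩ := exists_nat_ge ((1/4 - a) / s)
    exact ⟨n, by rw [div_le_iff₀ hs0] at hn; linarith⟩
  set n₀ := Nat.find hex with hn₀
  have hspec : 1/4 ≤ a + n₀ * s := Nat.find_spec hex
  have hn₀pos : n₀ ≠ 0 := by
    intro h
    rw [h] at hspec
    push_cast at hspec
    linarith
  have hprev : ¬ (1/4 ≤ a + ((n₀ - 1 : ℕ) : ℝ) * s) := Nat.find_min hex (by omega)
  have hcast : ((n₀ - 1 : ℕ) : ℝ) = (n₀ : ℝ) - 1 := by
    rw [Nat.cast_sub (Nat.one_le_iff_ne_zero.mpr hn₀pos)]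
    simp
  rw [hcast] at hprev
  push_neg at hprev
  have hw1 : a + n₀ * s < 3/4 := by nlinarith
  have hw0 : (0:ℝ) ≤ a + n₀ * s := by
    have : (0:ℝ) ≤ (n₀ : ℝ) * s := mul_nonneg (Nat.cast_nonneg n₀) hs0.le
    linarith
  have hfr : Int.fract (a + n₀ * s) = a + n₀ * s :=
    Int.fract_eq_self.mpr ⟨hw0, by linarith⟩
  have hlt := hflat (a + n₀ * s) (by rw [hfr]; exact hspec)
  rw [iter n₀] at hlt
  exact lt_irrefl M hlt
end
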